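/- arXiv:1206.3050 — 2 statements merged into one kernel-verified Lean document; each statement's English description precedes it below -/
import Mathlib

section
/- Let e be an n-tuple of positive integers, x ∈ ℝ^n, and z ∈ ℤ/ℓℤ with lift z̃ ∈ ℤ. Then 𝐁_e^{L,z}(x,Q) = −ℓ^{|e|−n} · Σ_{k=1}^{ℓ−1} Σ_{y∈{0,…,ℓ−1}^n} e(k(a_1y_1+…+a_ny_n−z̃)/ℓ) · 𝐁_e((x+y)/ℓ, Q); that is, the complex number on the right-hand side equals the real number on the left-hand side. -/
open scoped BigOperators
open scoped Classical

/-- The periodic Bernoulli function `B_k`. -/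
noncomputable def periodicBernoulli (k : ℕ) (x : ℝ) : ℝ :=
  if k = 1 then (if ∃ z : ℤ, x = (z : ℝ) then 0 else Int.fract x - 1 / 2)
  else Polynomial.eval (Int.fract x) ((Polynomial.bernoulli k).map (algebraMap ℚ ℝ))

/-- The set `J(e,v) = {j : e_j = 1 and v_j ∈ ℤ}`. -/
noncomputable def Jset {n : ℕ} (e : Fin n → ℕ) (v : Fin n → ℝ) : Finset (Fin n) :=
  Finset.univ.filter (fun j => e j = 1 ∧ ∃ z : ℤ, v j = (z : ℝ))

/-- `𝐁_e(v,Q)`. -/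
noncomputable def BBQ {n m : ℕ} (Q : Matrix (Fin m) (Fin n) ℝ) (e : Fin n → ℕ)
    (v : Fin n → ℝ) : ℝ :=
  (1 / (m : ℝ)) * ∑ i : Fin m,
    (∏ j ∈ Jset e v, Real.sign (Q i j) / 2) *
      ∏ j ∈ (Jset e v)ᶜ, periodicBernoulli (e j) (v j)

/-- `𝐁_e^{L,z}(x,Q)`. -/
noncomputable def BBLz {n m : ℕ} (ℓ : ℕ) (a : Fin n → ℤ)
    (Q : Matrix (Fin m) (Fin n) ℝ) (e : Fin n → ℕ) (z : ZMod ℓ) (x : Fin n → ℝ) : ℝ :=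
  BBQ Q e x - (ℓ : ℝ) ^ ((1 : ℤ) - (n : ℤ) + ∑ j, (e j : ℤ)) *
    ∑ y : Fin n → Fin ℓ,
      if (∑ j, (a j : ZMod ℓ) * ((y j : ℕ) : ZMod ℓ)) = z then
        BBQ Q e (fun j => (x j + ((y j : ℕ) : ℝ)) / (ℓ : ℝ)) else 0

/-- `e(t) = exp(2πit)`. -/
noncomputable def eE (t : ℝ) : ℂ := Complex.exp (2 * Real.pi * Complex.I * t)



/-!
Orthogonality of the additive characters of `ℤ/ℓℤ` turns the sum over `k` into
`ℓ·[L(y) = z] - 1`, so the right-hand side is `ℓ^{|e|-n} ∑_y 𝐁_e((x+y)/ℓ, Q)` minus the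
subtracted term of `𝐁_e^{L,z}(x,Q)`. What remains is the distribution relation
`ℓ^{|e|} ∑_y 𝐁_e((x+y)/ℓ, Q) = ℓ^n 𝐁_e(x,Q)`. Each summand of `𝐁_e` is a product of one-variable
factors, so this reduces to Raabe's multiplication theorem `bernoulliFun_mul`. A factor `B_1` whose
value at the integers is replaced by `c` differs from `t ↦ b_1(fract t)` by `(c + 1/2)·[t ∈ ℤ]`,
and the indicator of `ℤ` satisfies the same relation with weight `1`.
-/

open Finset Function

lemma eE_nat_mul (k : ℕ) (u : ℝ) : eE (k * u) = eE u ^ k := by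
  rw [eE, eE, ← Complex.exp_nat_mul]
  push_cast
  ring_nf

lemma eE_eq_one_iff (u : ℝ) : eE u = 1 ↔ ∃ n : ℤ, u = n := by
  have h2πI : (2 * Real.pi * Complex.I : ℂ) ≠ 0 := by simp [Real.pi_ne_zero]
  rw [eE, Complex.exp_eq_one_iff]
  refine exists_congr fun n => ⟨fun h => ?_, fun h => ?_⟩
  · exact_mod_cast mul_left_cancel₀ h2πI (h.trans (mul_comm _ _))
  · rw [h]; push_cast; ring

lemma sum_range_eE_mul_div {ℓ : ℕ} (hℓ : ℓ ≠ 0) (t : ℤ) :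
    ∑ k ∈ range ℓ, eE (k * t / ℓ) = if (ℓ : ℤ) ∣ t then (ℓ : ℂ) else 0 := by
  set ζ := eE (t / ℓ)
  have hpow (k : ℕ) : eE (k * t / ℓ) = ζ ^ k := by rw [mul_div_assoc, eE_nat_mul]
  have hζ_one : ζ = 1 ↔ (ℓ : ℤ) ∣ t := by
    rw [eE_eq_one_iff]
    refine exists_congr fun n => ?_
    rw [div_eq_iff (by exact_mod_cast hℓ), mul_comm]
    norm_cast
  simp only [hpow]
  split_ifs with hdvd
  · simp [hζ_one.mpr hdvd]
  · have hζℓ : ζ ^ ℓ = 1 := by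
      rw [← hpow, mul_div_cancel_left₀ _ (by exact_mod_cast hℓ), eE_eq_one_iff]
      exact ⟨t, rfl⟩
    rw [geom_sum_eq (mt hζ_one.mp hdvd), hζℓ, sub_self, zero_div]

lemma sum_Icc_eE_mul_div {ℓ : ℕ} (hℓ : ℓ ≠ 0) (t : ℤ) :
    ∑ k ∈ Icc 1 (ℓ - 1), eE (k * t / ℓ) = (if (ℓ : ℤ) ∣ t then (ℓ : ℂ) else 0) - 1 := by
  obtain ⟨ℓ, rfl⟩ := Nat.exists_eq_succ_of_ne_zero hℓ
  rw [← sum_range_eE_mul_div hℓ, sum_range_succ', Nat.succ_sub_one, ← Ico_add_one_right_eq_Icc,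
    sum_Ico_eq_sum_range]
  simp [eE, add_comm]

lemma periodic_sum_range_div {M : Type*} [AddCommGroup M] {φ : ℝ → M} (hφ : Periodic φ 1)
    (ℓ : ℕ) : Periodic (fun t => ∑ s ∈ range ℓ, φ ((t + s) / ℓ)) 1 := by
  intro t
  rcases eq_or_ne ℓ 0 with rfl | hℓ
  · simp
  have hshift (s : ℕ) : φ ((t + 1 + s) / ℓ) = φ ((t + ↑(s + 1)) / ℓ) := by push_cast; ring_nf
  have hwrap : φ ((t + ℓ) / ℓ) = φ ((t + ↑(0 : ℕ)) / ℓ) := by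
    rw [Nat.cast_zero, add_zero, add_div, div_self (Nat.cast_ne_zero.mpr hℓ), hφ]
  simp only [hshift]
  apply add_right_cancel (b := φ ((t + ↑(0 : ℕ)) / ℓ))
  rw [← sum_range_succ' (fun s : ℕ => φ ((t + s) / ℓ)), sum_range_succ, hwrap]

lemma sum_range_comp_fract {M : Type*} [AddCommGroup M] (ψ : ℝ → M) {ℓ : ℕ} (hℓ : ℓ ≠ 0)
    (t : ℝ) :
    ∑ s ∈ range ℓ, ψ (Int.fract ((t + s) / ℓ)) = ∑ s ∈ range ℓ, ψ ((Int.fract t + s) / ℓ) := by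
  have hper : Periodic (fun t => ∑ s ∈ range ℓ, ψ (Int.fract ((t + s) / ℓ))) 1 :=
    periodic_sum_range_div (φ := fun u => ψ (Int.fract u)) (fun u => by simp) ℓ
  rw [← hper.sub_int_mul_eq ⌊t⌋, mul_one, Int.self_sub_floor]
  refine sum_congr rfl fun s hs => ?_
  have hs : (s : ℝ) + 1 ≤ ℓ := by exact_mod_cast mem_range.mp hs
  have := Int.fract_lt_one t
  rw [Int.fract_eq_self.mpr ⟨by positivity, (div_lt_one (by positivity)).mpr (by linarith)⟩]

lemma sum_range_ite_fract_eq_zero {M : Type*} [AddCommGroup M] (b : M) {ℓ : ℕ} (hℓ : ℓ ≠ 0)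
    (t : ℝ) :
    ∑ s ∈ range ℓ, (if Int.fract ((t + s) / ℓ) = 0 then b else 0)
      = if Int.fract t = 0 then b else 0 := by
  have hzero (s : ℕ) : (Int.fract t + s) / ℓ = 0 ↔ s = 0 ∧ Int.fract t = 0 := by
    rw [div_eq_zero_iff, add_eq_zero_iff_of_nonneg (Int.fract_nonneg t) (Nat.cast_nonneg s)]
    simp [hℓ, and_comm]
  rw [sum_range_comp_fract (fun u => if u = 0 then b else 0) hℓ]
  simp [hzero, ite_and, Nat.pos_of_ne_zero hℓ]

def HasDistributionRelation (ℓ k : ℕ) (f : ℝ → ℝ) : Prop :=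
  ∀ t, (ℓ : ℝ) ^ k * ∑ s ∈ range ℓ, f ((t + s) / ℓ) = ℓ * f t

lemma hasDistributionRelation_bernoulliFun_fract (k : ℕ) {ℓ : ℕ} (hℓ : ℓ ≠ 0) :
    HasDistributionRelation ℓ k (fun t => bernoulliFun k (Int.fract t)) := by
  intro t
  have hℓ' : (ℓ : ℝ) ≠ 0 := by exact_mod_cast hℓ
  dsimp only
  rw [sum_range_comp_fract (bernoulliFun k) hℓ]
  conv_rhs => rw [← mul_div_cancel₀ (Int.fract t) hℓ', bernoulliFun_mul k hℓ]
  simp only [add_div]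
  field_simp

/-- With `c = sign(Q_ij)/2`, this is the `j`-th factor of the `i`-th summand of `𝐁_e(v,Q)`. -/
noncomputable def periodicBernoulliJump (c : ℝ) (k : ℕ) (t : ℝ) : ℝ :=
  if k = 1 ∧ ∃ z : ℤ, t = z then c else periodicBernoulli k t

lemma periodicBernoulliJump_eq (c : ℝ) (k : ℕ) (t : ℝ) :
    periodicBernoulliJump c k t
      = bernoulliFun k (Int.fract t) + if k = 1 ∧ Int.fract t = 0 then c + 1 / 2 else 0 := by
  have hint : (∃ z : ℤ, t = z) ↔ Int.fract t = 0 := by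
    rw [Int.fract_eq_zero_iff]
    exact exists_congr fun z => eq_comm
  rw [periodicBernoulliJump, periodicBernoulli, hint]
  by_cases hk : k = 1
  · subst hk
    by_cases h0 : Int.fract t = 0 <;> simp [h0]
  · simp [hk, bernoulliFun]

lemma hasDistributionRelation_periodicBernoulliJump (c : ℝ) (k : ℕ) {ℓ : ℕ} (hℓ : ℓ ≠ 0) :
    HasDistributionRelation ℓ k (periodicBernoulliJump c k) := by
  intro t
  simp only [periodicBernoulliJump_eq, sum_add_distrib, mul_add,
    hasDistributionRelation_bernoulliFun_fract k hℓ t]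
  congr 1
  by_cases hk : k = 1
  · subst hk
    simp only [true_and, pow_one, sum_range_ite_fract_eq_zero _ hℓ]
  · simp [hk]

lemma HasDistributionRelation.sum_pi_prod {ι : Type*} [Fintype ι] [DecidableEq ι] {ℓ : ℕ}
    {k : ι → ℕ} {f : ι → ℝ → ℝ} (hf : ∀ i, HasDistributionRelation ℓ (k i) (f i)) (x : ι → ℝ) :
    (ℓ : ℝ) ^ (∑ i, k i) * ∑ y : ι → Fin ℓ, ∏ i, f i ((x i + (y i : ℕ)) / ℓ)
      = ℓ ^ Fintype.card ι * ∏ i, f i (x i) := by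
  rw [← Fintype.prod_sum (fun i (s : Fin ℓ) => f i ((x i + (s : ℕ)) / ℓ)),
    ← prod_pow_eq_pow_sum, ← prod_mul_distrib, ← card_univ, ← prod_const, ← prod_mul_distrib]
  refine prod_congr rfl fun i _ => ?_
  rw [Fin.sum_univ_eq_sum_range (fun s => f i ((x i + s) / ℓ)), hf]

lemma BBQ_eq_sum_prod {n m : ℕ} (Q : Matrix (Fin m) (Fin n) ℝ) (e : Fin n → ℕ) (v : Fin n → ℝ) :
    BBQ Q e v
      = 1 / m * ∑ i, ∏ j, periodicBernoulliJump (Real.sign (Q i j) / 2) (e j) (v j) := by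
  rw [BBQ]
  congr 1
  refine sum_congr rfl fun i _ => ?_
  rw [← prod_mul_prod_compl (Jset e v)]
  congr 1 <;> refine prod_congr rfl fun j hj => ?_
  · rw [Jset, mem_filter] at hj
    rw [periodicBernoulliJump, if_pos hj.2]
  · rw [Jset, compl_filter, mem_filter] at hj
    rw [periodicBernoulliJump, if_neg hj.2]

lemma BBQ_distributionRelation {n m ℓ : ℕ} (hℓ : ℓ ≠ 0) (Q : Matrix (Fin m) (Fin n) ℝ)
    (e : Fin n → ℕ) (x : Fin n → ℝ) :
    (ℓ : ℝ) ^ (∑ j, e j) * ∑ y : Fin n → Fin ℓ, BBQ Q e (fun j => (x j + (y j : ℕ)) / ℓ)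
      = ℓ ^ n * BBQ Q e x := by
  simp only [BBQ_eq_sum_prod]
  rw [← mul_sum, sum_comm, mul_left_comm, mul_left_comm _ (1 / (m : ℝ))]
  congr 1
  rw [mul_sum, mul_sum]
  refine sum_congr rfl fun i _ => ?_
  simpa using HasDistributionRelation.sum_pi_prod
    (fun j => hasDistributionRelation_periodicBernoulliJump (Real.sign (Q i j) / 2) (e j) hℓ) x

lemma BBLz_eq_sum {n m ℓ : ℕ} (hℓ : ℓ ≠ 0) (a : Fin n → ℤ) (Q : Matrix (Fin m) (Fin n) ℝ)
    (e : Fin n → ℕ) (z : ZMod ℓ) (x : Fin n → ℝ) :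
    BBLz ℓ a Q e z x
      = -(ℓ : ℝ) ^ ((∑ j, (e j : ℤ)) - n) * ∑ y : Fin n → Fin ℓ,
          ((if ∑ j, (a j : ZMod ℓ) * ((y j : ℕ) : ZMod ℓ) = z then (ℓ : ℝ) else 0) - 1) *
            BBQ Q e (fun j => (x j + (y j : ℕ)) / ℓ) := by
  have hℓ' : (ℓ : ℝ) ≠ 0 := by exact_mod_cast hℓ
  have hdist := BBQ_distributionRelation hℓ Q e x
  have hexp : (∑ j, (e j : ℤ)) = ((∑ j, e j : ℕ) : ℤ) := by push_cast; rfl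
  simp only [sub_one_mul, ite_zero_mul, ← mul_ite_zero, sum_sub_distrib, ← mul_sum]
  rw [BBLz, hexp, zpow_sub₀ hℓ', zpow_add₀ hℓ', zpow_sub₀ hℓ', zpow_one]
  simp only [zpow_natCast]
  field_simp
  linear_combination -hdist

theorem BBLz_character_expansion_general {n m : ℕ}
    (ℓ : ℕ) (hℓ : ℓ.Prime) (a : Fin n → ℤ)
    (Q : Matrix (Fin m) (Fin n) ℝ)
    (e : Fin n → ℕ)
    (z : ZMod ℓ) (zt : ℤ) (hz : (zt : ZMod ℓ) = z) (x : Fin n → ℝ) :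
    ((BBLz ℓ a Q e z x : ℝ) : ℂ)
      = -(ℓ : ℂ) ^ ((∑ j, (e j : ℤ)) - (n : ℤ)) *
        ∑ k ∈ Finset.Icc 1 (ℓ - 1), ∑ y : Fin n → Fin ℓ,
          eE (((k : ℝ) * ((∑ j, (a j : ℝ) * ((y j : ℕ) : ℝ)) - (zt : ℝ))) / (ℓ : ℝ)) *
            ((BBQ Q e (fun j => (x j + ((y j : ℕ) : ℝ)) / (ℓ : ℝ)) : ℝ) : ℂ) := by
  have hℓ0 : ℓ ≠ 0 := hℓ.ne_zero
  have hL (y : Fin n → Fin ℓ) : (∑ j, (a j : ℝ) * ((y j : ℕ) : ℝ)) - zt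
      = ((∑ j, a j * ((y j : ℕ) : ℤ) - zt : ℤ) : ℝ) := by
    push_cast
    ring
  have hdvd (y : Fin n → Fin ℓ) : (ℓ : ℤ) ∣ ∑ j, a j * ((y j : ℕ) : ℤ) - zt
      ↔ ∑ j, (a j : ZMod ℓ) * ((y j : ℕ) : ZMod ℓ) = z := by
    rw [← ZMod.intCast_zmod_eq_zero_iff_dvd, ← hz]
    push_cast
    exact sub_eq_zero
  rw [BBLz_eq_sum hℓ0, sum_comm]
  push_cast
  congr 1
  refine sum_congr rfl fun y _ => ?_
  rw [← sum_mul, hL, sum_Icc_eE_mul_div hℓ0]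
  simp only [hdvd]
  split_ifs <;> simp

/-- Expression of `𝐁_e^{L,z}(x,Q)` via additive characters:
`𝐁_e^{L,z}(x,Q) = −ℓ^{|e|−n} Σ_{k=1}^{ℓ−1} Σ_{y∈{0,…,ℓ−1}^n}
  e(k(a·y − z̃)/ℓ)·𝐁_e((x+y)/ℓ, Q)`. -/
theorem BBLz_character_expansion {n m : ℕ} (hm : 0 < m)
    (ℓ : ℕ) (hℓ : ℓ.Prime) (a : Fin n → ℤ) (ha : ∀ j, ¬ (ℓ : ℤ) ∣ a j)
    (Q : Matrix (Fin m) (Fin n) ℝ) (hQ : ∀ i j, Q i j ≠ 0)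
    (e : Fin n → ℕ) (he : ∀ j, 0 < e j)
    (z : ZMod ℓ) (zt : ℤ) (hz : (zt : ZMod ℓ) = z) (x : Fin n → ℝ) :
    ((BBLz ℓ a Q e z x : ℝ) : ℂ)
      = -(ℓ : ℂ) ^ ((∑ j, (e j : ℤ)) - (n : ℤ)) *
        ∑ k ∈ Finset.Icc 1 (ℓ - 1), ∑ y : Fin n → Fin ℓ,
          eE (((k : ℝ) * ((∑ j, (a j : ℝ) * ((y j : ℕ) : ℝ)) - (zt : ℝ))) / (ℓ : ℝ)) *
            ((BBQ Q e (fun j => (x j + ((y j : ℕ) : ℝ)) / (ℓ : ℝ)) : ℝ) : ℂ) :=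
  BBLz_character_expansion_general ℓ hℓ a Q e z zt hz x
end

section
/- Let x = (x_1,…,x_n) ∈ ℝ^n, let J_0 = {j : x_j ∈ ℤ}, let z ∈ ℤ/ℓℤ with lift z̃ ∈ ℤ, and let 𝟙 = (1,…,1). Then 𝐁_𝟙^{L,z}(x,Q) = −(1/(m·2^{#J_0})) · Σ_{i=1}^m Σ_{J⊆J_0} Σ_{k=1}^{ℓ−1} [ e(−k(z̃ + a_1⌊x_1⌋ + … + a_n⌊x_n⌋)/ℓ) · (∏_{j∉J_0} (e(k·a_j/ℓ)−1))^{−1} · ∏_{j∈J_0∖J} (e(k·a_j/ℓ)+1)/(e(k·a_j/ℓ)−1) · ∏_{j∈J} sign(Q_{ij}) ]. -/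
open scoped BigOperators
open scoped Classical

/-!
With `e = 𝟙` the power of `ℓ` is `ℓ¹`, and each factor of `𝐁_𝟙(v, Q)` is `B₁(v_j)` with its value
at integers replaced by `sign(Q_ij)/2`; so one can work row by row. Detect the condition
`L(y) = z` by the characters `y ↦ ζ^(k (L(y) - z̃))`, `ζ = e(1/ℓ)`, `0 ≤ k < ℓ`: the sum over `y`
then factors into one-dimensional twisted sums `∑_{w<ℓ} ω^w B((x_j + w)/ℓ)` with `ω = ζ^(k a_j)`.
For `k = 0` this is the distribution relation `∑_w B((x + w)/ℓ) = B(x)`, which cancels `𝐁_𝟙(x, Q)`.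
For `k ≠ 0` we have `ω ≠ 1` because `ℓ ∤ k a_j`, and a geometric-series computation gives
`ω^(-⌊x⌋)` times `1/(ω - 1)`, plus `(sign + 1)/2` when `x ∈ ℤ`. Expanding the product of
the factors `(sign + (ω + 1)/(ω - 1))/2` over `j ∈ J₀` produces the sum over `J ⊆ J₀`.
-/

open Finset

/-- `B₁` with its value `0` at the integers replaced by `s / 2`; for `s = sign Q_ij` these are the
factors of `𝐁_𝟙(v, Q)`. -/
noncomputable def bernoulliOneReg (s v : ℝ) : ℝ :=
  if ∃ t : ℤ, v = t then s / 2 else Int.fract v - 1 / 2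

lemma bernoulliOneReg_add_intCast (s v : ℝ) (t : ℤ) :
    bernoulliOneReg s (v + t) = bernoulliOneReg s v := by
  have hint : (∃ r : ℤ, v + t = r) ↔ ∃ r : ℤ, v = r :=
    ⟨fun ⟨r, hr⟩ => ⟨r - t, by push_cast; linarith⟩,
      fun ⟨r, hr⟩ => ⟨r + t, by push_cast; linarith⟩⟩
  simp only [bernoulliOneReg, hint, Int.fract_add_intCast]

lemma bernoulliOneReg_fract (s v : ℝ) :
    bernoulliOneReg s (Int.fract v) = bernoulliOneReg s v := by
  rw [← bernoulliOneReg_add_intCast s (Int.fract v) ⌊v⌋, Int.fract_add_floor]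

lemma bernoulliOneReg_of_mem_Ico {s v : ℝ} (hv : v ∈ Set.Ico 0 1) :
    bernoulliOneReg s v = v - 1 / 2 + if v = 0 then (s + 1) / 2 else 0 := by
  have hint : (∃ t : ℤ, v = t) ↔ v = 0 := by
    rw [← Int.fract_eq_self.mpr hv, Int.fract_eq_zero_iff, Int.fract_eq_self.mpr hv]
    exact ⟨fun ⟨t, ht⟩ => ⟨t, ht.symm⟩, fun ⟨t, ht⟩ => ⟨t, ht.symm⟩⟩
  unfold bernoulliOneReg
  split_ifs with h <;> simp_all [Int.fract_eq_self.mpr hv]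
  ring

lemma bernoulliOneReg_add_natCast_div {s u : ℝ} (hu : u ∈ Set.Ico 0 1) {ℓ w : ℕ} (hw : w < ℓ) :
    bernoulliOneReg s ((u + w) / ℓ)
      = (u + w) / ℓ - 1 / 2 + if u = 0 ∧ w = 0 then (s + 1) / 2 else 0 := by
  have hℓ : (0 : ℝ) < ℓ := by exact_mod_cast w.zero_le.trans_lt hw
  have hwℓ : (w : ℝ) + 1 ≤ ℓ := by exact_mod_cast hw
  have hmem : (u + w) / ℓ ∈ Set.Ico 0 1 :=
    ⟨by have := hu.1; positivity, (div_lt_one hℓ).mpr (by linarith [hu.2])⟩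
  have hzero : (u + w) / ℓ = 0 ↔ u = 0 ∧ w = 0 := by
    rw [div_eq_zero_iff, or_iff_left hℓ.ne']
    constructor
    · intro h
      have : (w : ℝ) = 0 := by linarith [hu.1, (w.cast_nonneg : (0 : ℝ) ≤ w)]
      exact ⟨by linarith, by exact_mod_cast this⟩
    · rintro ⟨rfl, rfl⟩
      simp
  rw [bernoulliOneReg_of_mem_Ico hmem, if_congr hzero rfl rfl]

lemma BBQ_one_eq {n m : ℕ} (Q : Matrix (Fin m) (Fin n) ℝ) (v : Fin n → ℝ) :
    BBQ Q (fun _ => 1) v = 1 / m * ∑ i, ∏ j, bernoulliOneReg (Real.sign (Q i j)) (v j) := by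
  have hJ : Jset (fun _ => 1) v = univ.filter (fun j => ∃ t : ℤ, v j = t) := by
    simp [Jset]
  unfold BBQ
  congr 1
  refine sum_congr rfl fun i _ => ?_
  rw [hJ, compl_filter, ← prod_ite]
  refine prod_congr rfl fun j _ => ?_
  unfold bernoulliOneReg periodicBernoulli
  split_ifs <;> simp_all

lemma BBLz_one_eq {n m : ℕ} (ℓ : ℕ) (a : Fin n → ℤ) (Q : Matrix (Fin m) (Fin n) ℝ) (z : ZMod ℓ)
    (x : Fin n → ℝ) :
    (BBLz ℓ a Q (fun _ => 1) z x : ℂ)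
      = 1 / m * ∑ i, (∏ j, (bernoulliOneReg (Real.sign (Q i j)) (x j) : ℂ)
        - ℓ * ∑ y : Fin n → Fin ℓ, (if ∑ j, (a j : ZMod ℓ) * ((y j : ℕ) : ZMod ℓ) = z then
          ∏ j, (bernoulliOneReg (Real.sign (Q i j)) ((x j + (y j : ℕ)) / ℓ) : ℂ) else 0)) := by
  have hexp : (1 : ℤ) - n + ∑ _j : Fin n, ((1 : ℕ) : ℤ) = 1 := by simp
  unfold BBLz
  simp only [BBQ_one_eq, hexp, zpow_one]
  push_cast [apply_ite]
  have hite : ∀ (c : Prop) [Decidable c] (S : Fin m → ℂ),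
      (if c then 1 / m * ∑ i, S i else 0) = 1 / m * ∑ i, if c then S i else 0 := by
    intros
    split_ifs <;> simp
  simp only [hite, ← mul_sum]
  rw [sum_comm, mul_left_comm, ← mul_sub, mul_sum, ← sum_sub_distrib]

lemma Function.Periodic.sum_range_add {M : Type*} [AddCancelCommMonoid M] {ℓ : ℕ} {H : ℤ → M}
    (hH : Function.Periodic H ℓ) (c : ℤ) :
    ∑ y ∈ range ℓ, H (c + y) = ∑ y ∈ range ℓ, H y := by
  have step : ∀ d : ℤ, ∑ y ∈ range ℓ, H (d + 1 + y) = ∑ y ∈ range ℓ, H (d + y) := by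
    intro d
    have h := (sum_range_succ (fun y => H (d + y)) ℓ).symm.trans
      (sum_range_succ' (fun y => H (d + y)) ℓ)
    simp only [Nat.cast_add, Nat.cast_one, Nat.cast_zero, add_zero, hH d] at h
    simpa only [add_assoc, add_comm (1 : ℤ)] using (add_right_cancel h).symm
  induction c using Int.induction_on with
  | zero => simp
  | succ k ih => rw [step, ih]
  | pred k ih => rw [← ih, ← step, sub_add_cancel]

lemma geom_sum_eq_zero_of_pow_eq_one {K : Type*} [Field K] {ω : K} {ℓ : ℕ} (hω : ω ^ ℓ = 1)
    (h1 : ω ≠ 1) :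
    ∑ w ∈ range ℓ, ω ^ w = 0 := by
  rw [geom_sum_eq h1, hω, sub_self, zero_div]

lemma sub_one_mul_sum_range_mul_pow {R : Type*} [CommRing R] (ω : R) (N : ℕ) :
    (ω - 1) * ∑ w ∈ range N, (w : R) * ω ^ w = (N - 1) * ω ^ N - ∑ w ∈ range N, ω ^ w + 1 := by
  induction N with
  | zero => simp
  | succ N ih =>
    rw [sum_range_succ, sum_range_succ (fun w => ω ^ w), mul_add, ih]
    push_cast
    ring

lemma sum_range_mul_pow_of_pow_eq_one {K : Type*} [Field K] {ω : K} {ℓ : ℕ} (hω : ω ^ ℓ = 1)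
    (h1 : ω ≠ 1) :
    ∑ w ∈ range ℓ, (w : K) * ω ^ w = ℓ / (ω - 1) := by
  have h := sub_one_mul_sum_range_mul_pow ω ℓ
  rw [hω, geom_sum_eq_zero_of_pow_eq_one hω h1] at h
  rw [eq_div_iff (sub_ne_zero.mpr h1), mul_comm, h]
  ring

lemma sum_range_pow_mul_bernoulliOneReg_fract (ω : ℂ) (s x : ℝ) {ℓ : ℕ} (hℓ : 0 < ℓ) :
    ∑ w ∈ range ℓ, ω ^ w * (bernoulliOneReg s ((Int.fract x + w) / ℓ) : ℂ)
      = ∑ w ∈ range ℓ, ω ^ w * ((Int.fract x + w) / ℓ - 1 / 2)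
        + if Int.fract x = 0 then ((s : ℂ) + 1) / 2 else 0 := by
  have hu : Int.fract x ∈ Set.Ico 0 1 := ⟨Int.fract_nonneg x, Int.fract_lt_one x⟩
  have hterm : ∀ w ∈ range ℓ, ω ^ w * (bernoulliOneReg s ((Int.fract x + w) / ℓ) : ℂ)
      = ω ^ w * ((Int.fract x + w) / ℓ - 1 / 2)
        + if w = 0 then (if Int.fract x = 0 then ((s : ℂ) + 1) / 2 else 0) else 0 := by
    intro w hw
    rw [bernoulliOneReg_add_natCast_div hu (mem_range.mp hw)]
    split_ifs <;> simp_all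
  rw [sum_congr rfl hterm, sum_add_distrib, sum_ite_eq', if_pos (mem_range.mpr hℓ)]

lemma sum_range_pow_mul_bernoulliOneReg_add_div {ω : ℂ} {ℓ : ℕ} (hℓ : 0 < ℓ) (hω : ω ^ ℓ = 1)
    (s x : ℝ) :
    ∑ y ∈ range ℓ, ω ^ y * (bernoulliOneReg s ((x + y) / ℓ) : ℂ)
      = ω ^ (-⌊x⌋) * ∑ w ∈ range ℓ, ω ^ w * (bernoulliOneReg s ((Int.fract x + w) / ℓ) : ℂ) := by
  have hω0 : ω ≠ 0 := by rintro rfl; simp [hℓ.ne'] at hω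
  set H : ℤ → ℂ := fun w => ω ^ w * (bernoulliOneReg s ((Int.fract x + w) / ℓ) : ℂ)
  have hH : Function.Periodic H ℓ := by
    intro w
    have harg : (Int.fract x + ((w + ℓ : ℤ) : ℝ)) / ℓ = (Int.fract x + w) / ℓ + (1 : ℤ) := by
      push_cast
      field_simp
      ring
    simp only [H, zpow_add₀ hω0, zpow_natCast, hω, mul_one, harg, bernoulliOneReg_add_intCast]
  have hterm : ∀ y : ℕ,
      ω ^ y * (bernoulliOneReg s ((x + y) / ℓ) : ℂ) = ω ^ (-⌊x⌋) * H (⌊x⌋ + y) := by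
    intro y
    have harg : x + y = Int.fract x + ((⌊x⌋ + y : ℤ) : ℝ) := by
      push_cast
      rw [← add_assoc, Int.fract_add_floor]
    simp only [H, ← mul_assoc, ← zpow_add₀ hω0, neg_add_cancel_left, zpow_natCast, harg]
  rw [sum_congr rfl fun y _ => hterm y, ← mul_sum, hH.sum_range_add]
  simp only [H, zpow_natCast, Int.cast_natCast]

lemma sum_range_bernoulliOneReg_add_div {ℓ : ℕ} (hℓ : 0 < ℓ) (s x : ℝ) :
    ∑ y ∈ range ℓ, (bernoulliOneReg s ((x + y) / ℓ) : ℂ) = bernoulliOneReg s x := by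
  have hgauss : ∀ N : ℕ, ∑ w ∈ range N, (w : ℂ) = N * (N - 1) / 2 := by
    intro N
    induction N with
    | zero => simp
    | succ N ih => rw [sum_range_succ, ih]; push_cast; ring
  have hℓC : (ℓ : ℂ) ≠ 0 := by exact_mod_cast hℓ.ne'
  have h := sum_range_pow_mul_bernoulliOneReg_add_div hℓ (one_pow ℓ) s x
  have hfract := sum_range_pow_mul_bernoulliOneReg_fract 1 s x hℓ
  simp only [one_pow, one_zpow, one_mul] at h hfract
  rw [h, hfract, ← bernoulliOneReg_fract,
    bernoulliOneReg_of_mem_Ico ⟨Int.fract_nonneg x, Int.fract_lt_one x⟩]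
  simp only [sum_sub_distrib, ← sum_div, sum_add_distrib, hgauss, sum_const, card_range,
    nsmul_eq_mul]
  split_ifs <;> push_cast <;> field_simp <;> ring

lemma sum_range_pow_mul_bernoulliOneReg_add_div_of_ne_one {ω : ℂ} {ℓ : ℕ} (hℓ : 0 < ℓ)
    (hω : ω ^ ℓ = 1) (h1 : ω ≠ 1) (s x : ℝ) :
    ∑ y ∈ range ℓ, ω ^ y * (bernoulliOneReg s ((x + y) / ℓ) : ℂ)
      = ω ^ (-⌊x⌋) * if ∃ t : ℤ, x = t then (s + (ω + 1) / (ω - 1)) / 2 else (ω - 1)⁻¹ := by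
  have hℓC : (ℓ : ℂ) ≠ 0 := by exact_mod_cast hℓ.ne'
  have hint : (∃ t : ℤ, x = t) ↔ Int.fract x = 0 := by
    rw [Int.fract_eq_zero_iff]
    exact ⟨fun ⟨t, ht⟩ => ⟨t, ht.symm⟩, fun ⟨t, ht⟩ => ⟨t, ht.symm⟩⟩
  have hlin : ∑ w ∈ range ℓ, ω ^ w * ((Int.fract x + w) / ℓ - 1 / 2 : ℂ) = (ω - 1)⁻¹ := by
    have hsplit : ∀ w : ℕ, ω ^ w * ((Int.fract x + w) / ℓ - 1 / 2 : ℂ)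
        = (Int.fract x / ℓ - 1 / 2) * ω ^ w + (w * ω ^ w) / ℓ := fun w => by ring
    rw [sum_congr rfl fun w _ => hsplit w, sum_add_distrib, ← mul_sum, ← sum_div,
      geom_sum_eq_zero_of_pow_eq_one hω h1, sum_range_mul_pow_of_pow_eq_one hω h1]
    field_simp
    ring
  rw [sum_range_pow_mul_bernoulliOneReg_add_div hℓ hω,
    sum_range_pow_mul_bernoulliOneReg_fract ω s x hℓ, hlin, if_congr hint rfl rfl]
  split_ifs
  · field_simp
    ring
  · rw [add_zero]

lemma zpow_sum₀ {ι G₀ : Type*} [CommGroupWithZero G₀] {a : G₀} (ha : a ≠ 0) (s : Finset ι)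
    (f : ι → ℤ) :
    a ^ (∑ i ∈ s, f i) = ∏ i ∈ s, a ^ f i := by
  induction s using Finset.cons_induction with
  | empty => simp
  | cons i s hi ih => rw [sum_cons, prod_cons, zpow_add₀ ha, ih]

lemma IsPrimitiveRoot.zpow_pow_eq_one {K : Type*} [Field K] {ζ : K} {ℓ : ℕ}
    (hζ : IsPrimitiveRoot ζ ℓ) (t : ℤ) :
    (ζ ^ t) ^ ℓ = 1 := by
  rw [← zpow_natCast, ← zpow_mul, mul_comm, zpow_mul, zpow_natCast, hζ.pow_eq_one, one_zpow]

lemma IsPrimitiveRoot.zpow_mul_ne_one {K : Type*} [Field K] {ζ : K} {ℓ : ℕ} (hℓ : ℓ.Prime)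
    (hζ : IsPrimitiveRoot ζ ℓ) {k : ℕ} (hk : k ∈ Icc 1 (ℓ - 1)) {b : ℤ} (hb : ¬ (ℓ : ℤ) ∣ b) :
    ζ ^ ((k : ℤ) * b) ≠ 1 := by
  obtain ⟨hk1, hkℓ⟩ := mem_Icc.mp hk
  rw [Ne, hζ.zpow_eq_one_iff_dvd]
  rintro hdvd
  rcases (Nat.prime_iff_prime_int.mp hℓ).dvd_or_dvd hdvd with hℓk | hℓb
  · have := Nat.le_of_dvd hk1 (Int.natCast_dvd_natCast.mp hℓk)
    omega
  · exact hb hℓb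

lemma IsPrimitiveRoot.sum_range_zpow_mul {K : Type*} [Field K] {ζ : K} {ℓ : ℕ}
    (hζ : IsPrimitiveRoot ζ ℓ) (t : ℤ) :
    ∑ k ∈ range ℓ, ζ ^ ((k : ℤ) * t) = if (ℓ : ℤ) ∣ t then (ℓ : K) else 0 := by
  simp only [mul_comm _ t, zpow_mul, zpow_natCast]
  split_ifs with h
  · simp [(hζ.zpow_eq_one_iff_dvd t).mpr h]
  · exact geom_sum_eq_zero_of_pow_eq_one (hζ.zpow_pow_eq_one t)
      fun h1 => h ((hζ.zpow_eq_one_iff_dvd t).mp h1)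

lemma IsPrimitiveRoot.natCast_mul_sum_ite_eq_sum_prod {K : Type*} [Field K] {ζ : K} {ℓ n : ℕ}
    (hζ : IsPrimitiveRoot ζ ℓ) (a : Fin n → ℤ) (z : ZMod ℓ) (zt : ℤ) (hz : (zt : ZMod ℓ) = z)
    (f : Fin n → ℕ → K) :
    ℓ * ∑ y : Fin n → Fin ℓ,
        (if ∑ j, (a j : ZMod ℓ) * ((y j : ℕ) : ZMod ℓ) = z then ∏ j, f j (y j) else 0)
      = ∑ k ∈ range ℓ, ζ ^ (-((k : ℤ) * zt)) *
          ∏ j, ∑ w ∈ range ℓ, (ζ ^ ((k : ℤ) * a j)) ^ w * f j w := by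
  rcases Nat.eq_zero_or_pos ℓ with rfl | hℓ
  · simp
  have hζ0 : ζ ≠ 0 := hζ.ne_zero hℓ.ne'
  have hcond : ∀ y : Fin n → Fin ℓ, ∑ j, (a j : ZMod ℓ) * ((y j : ℕ) : ZMod ℓ) = z
      ↔ (ℓ : ℤ) ∣ ∑ j, a j * (y j : ℕ) - zt := fun y => by
    rw [← ZMod.intCast_zmod_eq_zero_iff_dvd]
    push_cast
    rw [sub_eq_zero, hz]
  have hchar : ∀ (k : ℕ) (y : Fin n → Fin ℓ), ζ ^ ((k : ℤ) * (∑ j, a j * (y j : ℕ) - zt))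
      = ζ ^ (-((k : ℤ) * zt)) * ∏ j, (ζ ^ ((k : ℤ) * a j)) ^ (y j : ℕ) := fun k y => by
    rw [mul_sub, sub_eq_add_neg, add_comm, zpow_add₀ hζ0, mul_sum, zpow_sum₀ hζ0]
    simp only [← mul_assoc, zpow_mul, zpow_natCast]
  calc ℓ * ∑ y : Fin n → Fin ℓ,
        (if ∑ j, (a j : ZMod ℓ) * ((y j : ℕ) : ZMod ℓ) = z then ∏ j, f j (y j) else 0)
      = ∑ y : Fin n → Fin ℓ, ∑ k ∈ range ℓ,
          ζ ^ ((k : ℤ) * (∑ j, a j * (y j : ℕ) - zt)) * ∏ j, f j (y j) := by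
        rw [mul_sum]
        refine sum_congr rfl fun y _ => ?_
        rw [← sum_mul, hζ.sum_range_zpow_mul, if_congr (hcond y) rfl rfl]
        split_ifs <;> simp
    _ = ∑ k ∈ range ℓ, ζ ^ (-((k : ℤ) * zt)) *
          ∑ y : Fin n → Fin ℓ, ∏ j, (ζ ^ ((k : ℤ) * a j)) ^ (y j : ℕ) * f j (y j) := by
        rw [sum_comm]
        simp only [hchar, prod_mul_distrib, mul_sum, mul_assoc]
    _ = _ := by
        simp only [Fintype.prod_sum, ← Fin.sum_univ_eq_sum_range
          (fun w => (ζ ^ (_ * a _)) ^ w * f _ w)]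

lemma prod_bernoulliOneReg_sub_fiber_sum {ζ : ℂ} {ℓ n : ℕ} (hℓ : ℓ.Prime)
    (hζ : IsPrimitiveRoot ζ ℓ) (a : Fin n → ℤ) (ha : ∀ j, ¬ (ℓ : ℤ) ∣ a j) (z : ZMod ℓ) (zt : ℤ)
    (hz : (zt : ZMod ℓ) = z) (s x : Fin n → ℝ) :
    ∏ j, (bernoulliOneReg (s j) (x j) : ℂ) - ℓ * ∑ y : Fin n → Fin ℓ,
        (if ∑ j, (a j : ZMod ℓ) * ((y j : ℕ) : ZMod ℓ) = z then
          ∏ j, (bernoulliOneReg (s j) ((x j + (y j : ℕ)) / ℓ) : ℂ) else 0)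
      = -∑ k ∈ Icc 1 (ℓ - 1), ζ ^ (-((k : ℤ) * (zt + ∑ j, a j * ⌊x j⌋))) *
          ∏ j, if ∃ t : ℤ, x j = t then
              (s j + (ζ ^ ((k : ℤ) * a j) + 1) / (ζ ^ ((k : ℤ) * a j) - 1)) / 2
            else (ζ ^ ((k : ℤ) * a j) - 1)⁻¹ := by
  have hℓ0 := hℓ.pos
  have hζ0 : ζ ≠ 0 := hζ.ne_zero hℓ0.ne'
  have hfib := hζ.natCast_mul_sum_ite_eq_sum_prod a z zt hz
    (fun j w => (bernoulliOneReg (s j) ((x j + w) / ℓ) : ℂ))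
  have hrange : ∀ F : ℕ → ℂ, ∑ k ∈ range ℓ, F k = F 0 + ∑ k ∈ Icc 1 (ℓ - 1), F k := by
    intro F
    have : range ℓ = insert 0 (Icc 1 (ℓ - 1)) := by
      ext k
      simp only [mem_range, mem_insert, mem_Icc]
      omega
    rw [this, sum_insert (by simp)]
  have hk : ∀ k ∈ Icc 1 (ℓ - 1), ζ ^ (-((k : ℤ) * zt)) *
      ∏ j, ∑ w ∈ range ℓ, (ζ ^ ((k : ℤ) * a j)) ^ w * (bernoulliOneReg (s j) ((x j + w) / ℓ) : ℂ)
      = ζ ^ (-((k : ℤ) * (zt + ∑ j, a j * ⌊x j⌋))) *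
          ∏ j, if ∃ t : ℤ, x j = t then
              (s j + (ζ ^ ((k : ℤ) * a j) + 1) / (ζ ^ ((k : ℤ) * a j) - 1)) / 2
            else (ζ ^ ((k : ℤ) * a j) - 1)⁻¹ := by
    intro k hk
    have hsplit : ζ ^ (-((k : ℤ) * (zt + ∑ j, a j * ⌊x j⌋)))
        = ζ ^ (-((k : ℤ) * zt)) * ∏ j, (ζ ^ ((k : ℤ) * a j)) ^ (-⌊x j⌋) := by
      rw [mul_add, neg_add, zpow_add₀ hζ0, mul_sum, ← sum_neg_distrib, zpow_sum₀ hζ0]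
      simp only [← zpow_mul, mul_assoc, mul_neg]
    rw [hsplit, mul_assoc, ← prod_mul_distrib]
    simp only [sum_range_pow_mul_bernoulliOneReg_add_div_of_ne_one hℓ0 (hζ.zpow_pow_eq_one _)
      (hζ.zpow_mul_ne_one hℓ hk (ha _))]
  rw [hfib, hrange, ← sum_congr rfl hk]
  simp [sum_range_bernoulliOneReg_add_div hℓ0]

lemma prod_ite_half_add {ι K : Type*} [Fintype ι] [DecidableEq ι] [Field K] (p : ι → Prop)
    [DecidablePred p] (f g d : ι → K) :
    ∏ j, (if p j then (f j + g j) / 2 else d j)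
      = (∏ j ∈ (univ.filter p)ᶜ, d j) * (1 / 2 ^ #(univ.filter p) *
          ∑ J ∈ (univ.filter p).powerset, (∏ j ∈ (univ.filter p) \ J, g j) * ∏ j ∈ J, f j) := by
  rw [prod_ite, compl_filter, mul_comm, prod_div_distrib, prod_add, prod_const,
    div_eq_mul_one_div, mul_comm (∑ _ ∈ _, _)]
  congr 2
  exact sum_congr rfl fun J _ => mul_comm _ _

lemma eE_intCast_div (ℓ : ℕ) (t : ℤ) : eE (t / ℓ) = eE (1 / ℓ) ^ t := by
  rw [eE, eE, ← Complex.exp_int_mul]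
  push_cast
  ring_nf

lemma isPrimitiveRoot_eE {ℓ : ℕ} (hℓ : ℓ ≠ 0) : IsPrimitiveRoot (eE (1 / ℓ)) ℓ := by
  convert Complex.isPrimitiveRoot_exp ℓ hℓ using 2
  rw [eE]
  push_cast
  rw [mul_one_div]

theorem BBLz_one_eval_general {n m : ℕ}
    (ℓ : ℕ) (hℓ : ℓ.Prime) (a : Fin n → ℤ) (ha : ∀ j, ¬ (ℓ : ℤ) ∣ a j)
    (Q : Matrix (Fin m) (Fin n) ℝ)
    (z : ZMod ℓ) (zt : ℤ) (hz : (zt : ZMod ℓ) = z) (x : Fin n → ℝ) :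
    ((BBLz ℓ a Q (fun _ => 1) z x : ℝ) : ℂ)
      = -(1 / ((m : ℂ) * 2 ^ (Finset.univ.filter
            (fun j => ∃ t : ℤ, x j = (t : ℝ)) : Finset (Fin n)).card)) *
        ∑ i : Fin m,
          ∑ J ∈ (Finset.univ.filter
              (fun j => ∃ t : ℤ, x j = (t : ℝ)) : Finset (Fin n)).powerset,
            ∑ k ∈ Finset.Icc 1 (ℓ - 1),
              eE (-((k : ℝ) * ((zt : ℝ) + ∑ j, (a j : ℝ) * ((⌊x j⌋ : ℤ) : ℝ))) / (ℓ : ℝ)) *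
                (∏ j ∈ (Finset.univ.filter
                    (fun j => ∃ t : ℤ, x j = (t : ℝ)) : Finset (Fin n))ᶜ,
                  (eE (((k : ℝ) * (a j : ℝ)) / (ℓ : ℝ)) - 1))⁻¹ *
                (∏ j ∈ (Finset.univ.filter
                    (fun j => ∃ t : ℤ, x j = (t : ℝ)) : Finset (Fin n)) \ J,
                  (eE (((k : ℝ) * (a j : ℝ)) / (ℓ : ℝ)) + 1) /
                    (eE (((k : ℝ) * (a j : ℝ)) / (ℓ : ℝ)) - 1)) *
                ∏ j ∈ J, ((Real.sign (Q i j) : ℝ) : ℂ) := by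
  set ζ := eE (1 / ℓ)
  have hζ : IsPrimitiveRoot ζ ℓ := isPrimitiveRoot_eE hℓ.ne_zero
  have hE : ∀ k : ℕ, ∀ b : ℤ, eE ((k : ℝ) * b / ℓ) = ζ ^ ((k : ℤ) * b) := fun k b => by
    rw [← eE_intCast_div]
    push_cast
    rfl
  have hE' : ∀ k : ℕ, eE (-((k : ℝ) * ((zt : ℝ) + ∑ j, (a j : ℝ) * ((⌊x j⌋ : ℤ) : ℝ))) / ℓ)
      = ζ ^ (-((k : ℤ) * (zt + ∑ j, a j * ⌊x j⌋))) := fun k => by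
    rw [← eE_intCast_div]
    push_cast
    rfl
  rw [BBLz_one_eq]
  simp only [prod_bernoulliOneReg_sub_fiber_sum hℓ hζ a ha z zt hz, prod_ite_half_add, hE, hE',
    prod_inv_distrib]
  rw [mul_sum, mul_sum]
  refine sum_congr rfl fun i _ => ?_
  rw [sum_comm]
  simp only [mul_sum, mul_neg, neg_mul, sum_neg_distrib]
  refine congrArg _ (sum_congr rfl fun k _ => sum_congr rfl fun J _ => ?_)
  ring

/-- Closed evaluation of `𝐁_𝟙^{L,z}(x,Q)` in general, with `J₀ = {j : x_j ∈ ℤ}`. -/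
theorem BBLz_one_eval {n m : ℕ} (hm : 0 < m)
    (ℓ : ℕ) (hℓ : ℓ.Prime) (a : Fin n → ℤ) (ha : ∀ j, ¬ (ℓ : ℤ) ∣ a j)
    (Q : Matrix (Fin m) (Fin n) ℝ) (hQ : ∀ i j, Q i j ≠ 0)
    (z : ZMod ℓ) (zt : ℤ) (hz : (zt : ZMod ℓ) = z) (x : Fin n → ℝ) :
    ((BBLz ℓ a Q (fun _ => 1) z x : ℝ) : ℂ)
      = -(1 / ((m : ℂ) * 2 ^ (Finset.univ.filter
            (fun j => ∃ t : ℤ, x j = (t : ℝ)) : Finset (Fin n)).card)) *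
        ∑ i : Fin m,
          ∑ J ∈ (Finset.univ.filter
              (fun j => ∃ t : ℤ, x j = (t : ℝ)) : Finset (Fin n)).powerset,
            ∑ k ∈ Finset.Icc 1 (ℓ - 1),
              eE (-((k : ℝ) * ((zt : ℝ) + ∑ j, (a j : ℝ) * ((⌊x j⌋ : ℤ) : ℝ))) / (ℓ : ℝ)) *
                (∏ j ∈ (Finset.univ.filter
                    (fun j => ∃ t : ℤ, x j = (t : ℝ)) : Finset (Fin n))ᶜ,
                  (eE (((k : ℝ) * (a j : ℝ)) / (ℓ : ℝ)) - 1))⁻¹ *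
                (∏ j ∈ (Finset.univ.filter
                    (fun j => ∃ t : ℤ, x j = (t : ℝ)) : Finset (Fin n)) \ J,
                  (eE (((k : ℝ) * (a j : ℝ)) / (ℓ : ℝ)) + 1) /
                    (eE (((k : ℝ) * (a j : ℝ)) / (ℓ : ℝ)) - 1)) *
                ∏ j ∈ J, ((Real.sign (Q i j) : ℝ) : ℂ) :=
  BBLz_one_eval_general ℓ hℓ a ha Q z zt hz x
end
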